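/- arXiv:2211.05010 — 12 statements merged into one kernel-verified Lean document; each statement's English description precedes it below -/
import Mathlib

section
/- Let a₁, b₁, c₁, d₁, e₁, a₂, b₂, c₂, d₂ be integers with a₁ ≠ 0, b₁ ≠ 0, and a₂ ≠ 0. Then the system of equations a₁x² + b₁y² + c₁x + d₁y + e₁ = 0 and a₂xy + b₂x + c₂y + d₂ = 0 has only finitely many integer solutions (x, y). -/
/-- If `a*x^2 + b*y^2 + c*x + d*y + e = 0` with `a ≠ 0` and `|y| ≤ B`, then `|x|` is bounded. -/
lemma aux_bound (a b c d e x y B : ℤ) (ha : a ≠ 0) (hB : 0 ≤ B) (hy : |y| ≤ B)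
    (h : a * x ^ 2 + b * y ^ 2 + c * x + d * y + e = 0) :
    |x| ≤ |b| * B ^ 2 + |d| * B + |e| + |c| := by
  have ha1 : 1 ≤ |a| := Int.one_le_abs ha
  have hx2 : |a| * x ^ 2 = |b * y ^ 2 + c * x + d * y + e| := by
    have : a * x ^ 2 = -(b * y ^ 2 + c * x + d * y + e) := by linarith
    calc |a| * x ^ 2 = |a * x ^ 2| := by
          rw [abs_mul, abs_of_nonneg (sq_nonneg x)]
      _ = |b * y ^ 2 + c * x + d * y + e| := by rw [this, abs_neg]
  have htri : |b * y ^ 2 + c * x + d * y + e| ≤ |b| * y ^ 2 + |c| * |x| + |d| * |y| + |e| := by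
    calc |b * y ^ 2 + c * x + d * y + e| ≤ |b * y ^ 2 + c * x + d * y| + |e| := abs_add_le _ _
      _ ≤ |b * y ^ 2 + c * x| + |d * y| + |e| := by linarith [abs_add_le (b * y ^ 2 + c * x) (d * y)]
      _ ≤ |b * y ^ 2| + |c * x| + |d * y| + |e| := by linarith [abs_add_le (b * y ^ 2) (c * x)]
      _ = |b| * y ^ 2 + |c| * |x| + |d| * |y| + |e| := by
          rw [abs_mul, abs_mul, abs_mul, abs_of_nonneg (sq_nonneg y)]
  have hy2 : y ^ 2 ≤ B ^ 2 := by nlinarith [abs_nonneg y, sq_abs y]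
  have hxs : x ^ 2 ≤ |b| * B ^ 2 + |c| * |x| + |d| * B + |e| := by
    nlinarith [sq_nonneg x, abs_nonneg b, abs_nonneg d]
  by_contra hcon
  push_neg at hcon
  nlinarith [sq_abs x, abs_nonneg x, abs_nonneg b, abs_nonneg c, abs_nonneg d, abs_nonneg e, mul_nonneg (abs_nonneg b) (sq_nonneg B), mul_nonneg (abs_nonneg d) hB, mul_le_mul_of_nonneg_left hcon.le (abs_nonneg c)]

theorem stmt_1 (a₁ b₁ c₁ d₁ e₁ a₂ b₂ c₂ d₂ : ℤ)
    (ha₁ : a₁ ≠ 0) (hb₁ : b₁ ≠ 0) (ha₂ : a₂ ≠ 0) :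
    Set.Finite {p : ℤ × ℤ |
      a₁ * p.1 ^ 2 + b₁ * p.2 ^ 2 + c₁ * p.1 + d₁ * p.2 + e₁ = 0 ∧
      a₂ * p.1 * p.2 + b₂ * p.1 + c₂ * p.2 + d₂ = 0} := by
  set B : ℤ := |b₂| + |c₂| + |d₂| with hBdef
  have hB : 0 ≤ B := by positivity
  set N : ℤ := (|a₁| + |b₁|) * B ^ 2 + (|c₁| + |d₁|) * B + |e₁| + |c₁| + |d₁| + B with hNdef
  have hN : B ≤ N := by nlinarith [sq_nonneg B, abs_nonneg a₁, abs_nonneg b₁, abs_nonneg c₁, abs_nonneg d₁, abs_nonneg e₁, mul_nonneg (abs_nonneg c₁) hB, mul_nonneg (abs_nonneg d₁) hB, mul_nonneg (add_nonneg (abs_nonneg a₁) (abs_nonneg b₁)) (sq_nonneg B)]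
  apply Set.Finite.subset (Set.finite_Icc ((-N, -N) : ℤ × ℤ) (N, N))
  rintro ⟨x, y⟩ ⟨h1, h2⟩
  simp only at h1 h2
  -- Step 1: min(|x|, |y|) ≤ B
  have hmin : |x| ≤ B ∨ |y| ≤ B := by
    by_contra hcon
    push_neg at hcon
    obtain ⟨hx, hy⟩ := hcon
    have ha2 : 1 ≤ |a₂| := Int.one_le_abs ha₂
    have key : |a₂| * |x| * |y| ≤ |b₂| * |x| + |c₂| * |y| + |d₂| := by
      have : a₂ * x * y = -(b₂ * x + c₂ * y + d₂) := by linarith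
      calc |a₂| * |x| * |y| = |a₂ * x * y| := by rw [abs_mul, abs_mul]
        _ = |b₂ * x + c₂ * y + d₂| := by rw [this, abs_neg]
        _ ≤ |b₂ * x + c₂ * y| + |d₂| := abs_add_le _ _
        _ ≤ |b₂ * x| + |c₂ * y| + |d₂| := by linarith [abs_add_le (b₂ * x) (c₂ * y)]
        _ = |b₂| * |x| + |c₂| * |y| + |d₂| := by rw [abs_mul, abs_mul]
    have h1x : B + 1 ≤ |x| := hx
    have h1y : B + 1 ≤ |y| := hy
    nlinarith [mul_nonneg (abs_nonneg x) (abs_nonneg y), abs_nonneg b₂, abs_nonneg c₂, abs_nonneg d₂, mul_le_mul h1x h1y (by linarith) (abs_nonneg x), mul_le_mul_of_nonneg_right ha2 (mul_nonneg (abs_nonneg x) (abs_nonneg y))]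
  -- Step 2: bound both coordinates
  have hbx : |x| ≤ N ∧ |y| ≤ N := by
    rcases hmin with hx | hy
    · have := aux_bound b₁ a₁ d₁ c₁ e₁ y x B hb₁ hB hx (by linarith)
      constructor
      · linarith
      · nlinarith [sq_nonneg B, abs_nonneg a₁, abs_nonneg b₁, abs_nonneg c₁, abs_nonneg d₁, mul_nonneg (abs_nonneg c₁) hB, mul_nonneg (abs_nonneg b₁) (sq_nonneg B)]
    · have := aux_bound a₁ b₁ c₁ d₁ e₁ x y B ha₁ hB hy (by linarith)
      constructor
      · nlinarith [sq_nonneg B, abs_nonneg a₁, abs_nonneg b₁, abs_nonneg c₁, abs_nonneg d₁, mul_nonneg (abs_nonneg d₁) hB, mul_nonneg (abs_nonneg a₁) (sq_nonneg B)]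
      · linarith
  obtain ⟨hx, hy⟩ := hbx
  rw [abs_le] at hx hy
  exact ⟨⟨hx.1, hy.1⟩, ⟨hx.2, hy.2⟩⟩
end

section
/- Let n, a, b, r, α be elements of ℤ[√d] such that ab + n = r², 3n = (a + 2r + α)(a + 2r − α), and the four elements a, b, a + b + 2r, a + 4b + 4r are nonzero and pairwise distinct. Then {a, b, a + b + 2r, a + 4b + 4r} is a quadruple in ℤ[√d] with the property D(n). -/
theorem stmt_2 (d : ℤ) (n a b r α : ℤ√d)
    (h1 : a * b + n = r ^ 2)
    (h2 : 3 * n = (a + 2 * r + α) * (a + 2 * r - α))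
    (hne : a ≠ 0 ∧ b ≠ 0 ∧ a + b + 2 * r ≠ 0 ∧ a + 4 * b + 4 * r ≠ 0)
    (hdist : a ≠ b ∧ a ≠ a + b + 2 * r ∧ a ≠ a + 4 * b + 4 * r ∧
      b ≠ a + b + 2 * r ∧ b ≠ a + 4 * b + 4 * r ∧ a + b + 2 * r ≠ a + 4 * b + 4 * r) :
    ∀ x ∈ ({a, b, a + b + 2 * r, a + 4 * b + 4 * r} : Set (ℤ√d)),
      ∀ y ∈ ({a, b, a + b + 2 * r, a + 4 * b + 4 * r} : Set (ℤ√d)),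
        x ≠ y → IsSquare (x * y + n) := by
  intro x hx y hy hxy
  simp only [Set.mem_insert_iff, Set.mem_singleton_iff] at hx hy
  rcases hx with hx | hx | hx | hx <;> rcases hy with hy | hy | hy | hy <;>
      rw [hx, hy] <;> (try exact absurd (hx.trans hy.symm) hxy)
  · exact ⟨r, by linear_combination h1⟩
  · exact ⟨a + r, by linear_combination h1⟩
  · exact ⟨α, by linear_combination 4 * h1 - h2⟩
  · exact ⟨r, by linear_combination h1⟩
  · exact ⟨b + r, by linear_combination h1⟩
  · exact ⟨2 * b + r, by linear_combination h1⟩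
  · exact ⟨a + r, by linear_combination h1⟩
  · exact ⟨b + r, by linear_combination h1⟩
  · exact ⟨a + 2 * b + 3 * r, by linear_combination h1⟩
  · exact ⟨α, by linear_combination 4 * h1 - h2⟩
  · exact ⟨2 * b + r, by linear_combination h1⟩
  · exact ⟨a + 2 * b + 3 * r, by linear_combination h1⟩
end

section
/- Let d ≡ 2 (mod 4) be a square-free positive integer such that both x² − dy² = −1 and x² − dy² = 6 have integer solutions. Then d ≡ 10 (mod 12). -/
lemma sq_mod3 (x : ℤ) : x ^ 2 % 3 = (x % 3) ^ 2 % 3 := by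
  conv_lhs => rw [show x ^ 2 = x * x by ring, Int.mul_emod]
  rw [show (x % 3) ^ 2 = (x % 3) * (x % 3) by ring, Int.mul_emod]

theorem stmt_3 (d : ℤ) (hd : d % 4 = 2) (hsf : Squarefree d) (hpos : 0 < d)
    (h1 : ∃ x y : ℤ, x ^ 2 - d * y ^ 2 = -1)
    (h6 : ∃ x y : ℤ, x ^ 2 - d * y ^ 2 = 6) :
    d % 12 = 10 := by
  have h3 : d % 3 = 1 := by
    have hc : d % 3 = 0 ∨ d % 3 = 1 ∨ d % 3 = 2 := by omega
    rcases hc with hc | hc | hc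
    · -- d ≡ 0 mod 3 : x² ≡ -1 mod 3 impossible
      exfalso
      obtain ⟨x, y, h⟩ := h1
      obtain ⟨m, hm⟩ : (3 : ℤ) ∣ d := by omega
      subst hm
      have key : x ^ 2 = 3 * (m * y ^ 2) - 1 := by linarith
      have hp := sq_mod3 x
      have hx : x % 3 = 0 ∨ x % 3 = 1 ∨ x % 3 = 2 := by omega
      rcases hx with h' | h' | h' <;> rw [h'] at hp <;> norm_num at hp <;> omega
    · exact hc
    · -- d ≡ 2 mod 3 : x² + y² ≡ 0 mod 3 forces 3∣x, 3∣y, then 9∣6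
      exfalso
      obtain ⟨x, y, h⟩ := h6
      obtain ⟨m, hm⟩ : ∃ m, d = 3 * m + 2 := ⟨(d - 2)/3, by omega⟩
      have key : x ^ 2 + y ^ 2 = 3 * (m * y ^ 2 + y ^ 2 + 2) := by
        rw [hm] at h; ring_nf; ring_nf at h; linarith
      have hpx := sq_mod3 x
      have hpy := sq_mod3 y
      have hx : x % 3 = 0 ∨ x % 3 = 1 ∨ x % 3 = 2 := by omega
      have hy : y % 3 = 0 ∨ y % 3 = 1 ∨ y % 3 = 2 := by omega
      have hx0 : x % 3 = 0 ∧ y % 3 = 0 := by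
        rcases hx with h' | h' | h' <;> rcases hy with h'' | h'' | h'' <;>
          rw [h'] at hpx <;> rw [h''] at hpy <;> norm_num at hpx hpy <;> omega
      obtain ⟨a, ha⟩ : (3 : ℤ) ∣ x := by omega
      obtain ⟨b, hb⟩ : (3 : ℤ) ∣ y := by omega
      subst ha hb
      have h9 : 9 * (a ^ 2 - d * b ^ 2) = 6 := by ring_nf; ring_nf at h; linarith
      set k := a ^ 2 - d * b ^ 2
      omega
  omega
end

section
/- Let d ≡ 2 (mod 4) be a square-free positive integer such that both x² − dy² = −1 and x² − dy² = 6 have integer solutions. Then every integer solution (x, y) of x² − dy² = 1 satisfies x ≡ ±1 (mod 6) and y ≡ 0 (mod 6). -/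
lemma aux_d9a : ∀ d a b : ZMod 9, a^2 - d*b^2 = -1 → ¬(d = 0 ∨ d = 3 ∨ d = 6) := by decide

lemma aux_d9c : ∀ d c e : ZMod 9, c^2 - d*e^2 = 6 → ¬(d = 2 ∨ d = 5 ∨ d = 8) := by decide

lemma aux_d9 : ∀ d a b c e : ZMod 9, a^2 - d*b^2 = -1 → c^2 - d*e^2 = 6 →
    (d = 1 ∨ d = 4 ∨ d = 7) := by
  intro d a b c e h1 h2
  have ha := aux_d9a d a b h1
  have hc := aux_d9c d c e h2
  clear h1 h2 a b c e
  revert d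
  decide

lemma aux_xy9 : ∀ d x y : ZMod 9, (d = 1 ∨ d = 4 ∨ d = 7) → x^2 - d*y^2 = 1 →
    x^2 = 1 ∧ y^2 = 0 := by decide

lemma aux_xy4 : ∀ x y : ZMod 4, x^2 - 2*y^2 = 1 → x^2 = 1 ∧ y^2 = 0 := by decide

theorem stmt_4 (d : ℤ) (hd : d % 4 = 2) (hsf : Squarefree d) (hpos : 0 < d)
    (h1 : ∃ x y : ℤ, x ^ 2 - d * y ^ 2 = -1)
    (h6 : ∃ x y : ℤ, x ^ 2 - d * y ^ 2 = 6) :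
    ∀ x y : ℤ, x ^ 2 - d * y ^ 2 = 1 →
      (x % 6 = 1 ∨ x % 6 = 5) ∧ y % 6 = 0 := by
  obtain ⟨a, b, ha⟩ := h1
  obtain ⟨c, e, hc⟩ := h6
  intro x y hxy
  -- mod 9 analysis
  have h9a : (a : ZMod 9)^2 - (d : ZMod 9)*(b : ZMod 9)^2 = -1 := by
    exact_mod_cast congrArg (fun z : ℤ => (z : ZMod 9)) ha
  have h9c : (c : ZMod 9)^2 - (d : ZMod 9)*(e : ZMod 9)^2 = 6 := by
    exact_mod_cast congrArg (fun z : ℤ => (z : ZMod 9)) hc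
  have h9x : (x : ZMod 9)^2 - (d : ZMod 9)*(y : ZMod 9)^2 = 1 := by
    exact_mod_cast congrArg (fun z : ℤ => (z : ZMod 9)) hxy
  obtain ⟨hx9, hy9⟩ := aux_xy9 _ _ _ (aux_d9 _ _ _ _ _ h9a h9c) h9x
  have p3 : Prime (3 : ℤ) := by norm_num
  have h9y : (9 : ℤ) ∣ y^2 := by
    have : ((y^2 : ℤ) : ZMod 9) = 0 := by push_cast; exact hy9
    exact_mod_cast (ZMod.intCast_zmod_eq_zero_iff_dvd _ 9).1 this
  have h3y : (3 : ℤ) ∣ y := p3.dvd_of_dvd_pow (dvd_trans (by norm_num) h9y)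
  have h9x1 : (9 : ℤ) ∣ x^2 - 1 := by
    have : ((x^2 - 1 : ℤ) : ZMod 9) = 0 := by push_cast; rw [hx9]; ring
    exact_mod_cast (ZMod.intCast_zmod_eq_zero_iff_dvd _ 9).1 this
  have h3x : ¬ (3 : ℤ) ∣ x := by
    intro h
    have h1' : (3 : ℤ) ∣ x^2 := Dvd.dvd.pow h (by norm_num)
    have h2' : (3 : ℤ) ∣ x^2 - 1 := dvd_trans (by norm_num) h9x1
    have : (3 : ℤ) ∣ 1 := by
      have := dvd_sub h1' h2'
      simpa using this
    norm_num at this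
  -- mod 4 analysis
  have hd4 : (d : ZMod 4) = 2 := by
    have : ((d : ℤ) : ZMod 4) = ((2 : ℤ) : ZMod 4) :=
      (ZMod.intCast_eq_intCast_iff _ _ _).2 (show d % 4 = 2 % 4 by omega)
    simpa using this
  have h4x : (x : ZMod 4)^2 - 2*(y : ZMod 4)^2 = 1 := by
    have h := congrArg (fun z : ℤ => (z : ZMod 4)) hxy
    push_cast at h
    rw [hd4] at h
    exact h
  obtain ⟨hx4, hy4⟩ := aux_xy4 _ _ h4x
  have h4y : (4 : ℤ) ∣ y^2 := by
    have : ((y^2 : ℤ) : ZMod 4) = 0 := by push_cast; exact hy4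
    exact_mod_cast (ZMod.intCast_zmod_eq_zero_iff_dvd _ 4).1 this
  have p2 : Prime (2 : ℤ) := Int.prime_two
  have h2y : (2 : ℤ) ∣ y := p2.dvd_of_dvd_pow (dvd_trans (by norm_num) h4y)
  have h4x1 : (4 : ℤ) ∣ x^2 - 1 := by
    have : ((x^2 - 1 : ℤ) : ZMod 4) = 0 := by push_cast; rw [hx4]; ring
    exact_mod_cast (ZMod.intCast_zmod_eq_zero_iff_dvd _ 4).1 this
  have h2x : ¬ (2 : ℤ) ∣ x := by
    intro h
    have h1' : (2 : ℤ) ∣ x^2 := Dvd.dvd.pow h (by norm_num)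
    have h2' : (2 : ℤ) ∣ x^2 - 1 := dvd_trans (by norm_num) h4x1
    have : (2 : ℤ) ∣ 1 := by
      have := dvd_sub h1' h2'
      simpa using this
    norm_num at this
  exact ⟨by omega, by omega⟩
end

section
/- Let d ≡ 2 (mod 4) be a square-free positive integer such that both x² − dy² = −1 and x² − dy² = 6 have integer solutions. Then every integer solution (x, y) of x² − dy² = −1 satisfies x ≡ 3 (mod 6) or x ≡ −3 (mod 6), and y ≡ ±1 (mod 6). -/
lemma cast_eq_zmod (n : ℕ) (d x y c : ℤ) (h : x ^ 2 - d * y ^ 2 = c) :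
    (x : ZMod n) ^ 2 - (d : ZMod n) * (y : ZMod n) ^ 2 = (c : ZMod n) := by
  have := congrArg (fun z : ℤ => (z : ZMod n)) h
  push_cast at this
  exact this

theorem stmt_5 (d : ℤ) (hd : d % 4 = 2) (hsf : Squarefree d) (hpos : 0 < d)
    (h1 : ∃ x y : ℤ, x ^ 2 - d * y ^ 2 = -1)
    (h6 : ∃ x y : ℤ, x ^ 2 - d * y ^ 2 = 6) :
    ∀ x y : ℤ, x ^ 2 - d * y ^ 2 = -1 →
      x % 6 = 3 ∧ (y % 6 = 1 ∨ y % 6 = 5) := by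
  obtain ⟨x1, y1, h1⟩ := h1
  obtain ⟨x6, y6, h6⟩ := h6
  -- d mod 4 is 2
  have hd4 : (d : ZMod 4) = 2 := by
    rw [show (2 : ZMod 4) = ((2 : ℤ) : ZMod 4) by norm_num, ZMod.intCast_eq_intCast_iff]
    show d % 4 = 2 % 4
    omega
  -- d mod 3 is 1
  have hd3 : (d : ZMod 3) = 1 := by
    rcases (by decide : ∀ c : ZMod 3, c = 0 ∨ c = 1 ∨ c = 2) (d : ZMod 3) with h | h | h
    · exfalso
      have e := cast_eq_zmod 3 d x1 y1 (-1) h1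
      rw [h] at e
      exact (by decide : ∀ a b : ZMod 3, a ^ 2 - 0 * b ^ 2 = ((-1 : ℤ) : ZMod 3) → False) _ _ e
    · exact h
    · exfalso
      have e := cast_eq_zmod 3 d x6 y6 6 h6
      rw [h] at e
      have key := (by decide :
        ∀ a b : ZMod 3, a ^ 2 - 2 * b ^ 2 = ((6 : ℤ) : ZMod 3) → a = 0 ∧ b = 0) _ _ e
      have hx : (3 : ℤ) ∣ x6 := (ZMod.intCast_zmod_eq_zero_iff_dvd x6 3).1 key.1
      have hy : (3 : ℤ) ∣ y6 := (ZMod.intCast_zmod_eq_zero_iff_dvd y6 3).1 key.2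
      have h9 : (9 : ℤ) ∣ 6 := by
        rw [← h6]
        have hx2 : (9 : ℤ) ∣ x6 ^ 2 := by
          obtain ⟨u, rfl⟩ := hx; exact ⟨u ^ 2, by ring⟩
        have hy2 : (9 : ℤ) ∣ d * y6 ^ 2 := by
          obtain ⟨v, rfl⟩ := hy; exact ⟨d * v ^ 2, by ring⟩
        exact dvd_sub hx2 hy2
      norm_num at h9
  intro x y h
  have e3 := cast_eq_zmod 3 d x y (-1) h
  rw [hd3] at e3
  have key3 := (by decide :
    ∀ a b : ZMod 3, a ^ 2 - 1 * b ^ 2 = ((-1 : ℤ) : ZMod 3) → a = 0 ∧ b ≠ 0) _ _ e3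
  have hx3 : (3 : ℤ) ∣ x := (ZMod.intCast_zmod_eq_zero_iff_dvd x 3).1 key3.1
  have hy3 : ¬ (3 : ℤ) ∣ y := fun hc =>
    key3.2 ((ZMod.intCast_zmod_eq_zero_iff_dvd y 3).2 hc)
  have e4 := cast_eq_zmod 4 d x y (-1) h
  rw [hd4] at e4
  have key4 := (by decide :
    ∀ a b : ZMod 4, a ^ 2 - 2 * b ^ 2 = ((-1 : ℤ) : ZMod 4) → (a = 1 ∨ a = 3) ∧ (b = 1 ∨ b = 3)) _ _ e4
  have hx2 : ¬ (2 : ℤ) ∣ x := by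
    intro hc
    obtain ⟨k, rfl⟩ := hc
    have : ((2 * k : ℤ) : ZMod 4) = 2 * (k : ZMod 4) := by push_cast; ring
    rw [this] at key4
    exact (by decide : ∀ c : ZMod 4, ¬(2 * c = 1 ∨ 2 * c = 3)) _ key4.1
  have hy2 : ¬ (2 : ℤ) ∣ y := by
    intro hc
    obtain ⟨k, rfl⟩ := hc
    have : ((2 * k : ℤ) : ZMod 4) = 2 * (k : ZMod 4) := by push_cast; ring
    rw [this] at key4
    exact (by decide : ∀ c : ZMod 4, ¬(2 * c = 1 ∨ 2 * c = 3)) _ key4.2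
  constructor
  · omega
  · omega
end

section
/- Let d ≡ 2 (mod 4) be a square-free positive integer such that both x² − dy² = −1 and x² − dy² = 6 have integer solutions. Then every integer solution (x, y) of x² − dy² = −6 satisfies x ≡ ±2 (mod 12) and y ≡ ±1 (mod 6). -/
private lemma tr7 (n : ℕ) (x c : ℤ) : (x : ZMod n) = (c : ZMod n) ↔ x % n = c % n :=
  ZMod.intCast_eq_intCast_iff' x c n

private lemma castEqn7 (n : ℕ) (d x y r : ℤ) (h : x ^ 2 - d * y ^ 2 = r) :
    (x : ZMod n) ^ 2 - (d : ZMod n) * (y : ZMod n) ^ 2 = (r : ZMod n) := by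
  have := congrArg (fun t : ℤ => (t : ZMod n)) h
  push_cast at this
  exact this

theorem stmt_7 (d : ℤ) (hd : d % 4 = 2) (hsf : Squarefree d) (hpos : 0 < d)
    (h1 : ∃ x y : ℤ, x ^ 2 - d * y ^ 2 = -1)
    (h6 : ∃ x y : ℤ, x ^ 2 - d * y ^ 2 = 6) :
    ∀ x y : ℤ, x ^ 2 - d * y ^ 2 = -6 →
      (x % 12 = 2 ∨ x % 12 = 10) ∧ (y % 6 = 1 ∨ y % 6 = 5) := by
  obtain ⟨a, b, hab⟩ := h1
  obtain ⟨c, e, hce⟩ := h6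
  -- d ≡ 2 mod 8
  have hd8 : d % 8 = 2 := by
    rcases (by omega : d % 8 = 2 ∨ d % 8 = 6) with h | h
    · exact h
    · exfalso
      have hd' : (d : ZMod 8) = ((6 : ℤ) : ZMod 8) := (tr7 8 d 6).2 (by omega)
      have h8 := castEqn7 8 d a b (-1) hab
      rw [hd'] at h8
      revert h8
      have : ∀ x y : ZMod 8, x ^ 2 - ((6:ℤ) : ZMod 8) * y ^ 2 ≠ ((-1:ℤ) : ZMod 8) := by decide
      exact this a b
  -- d ≡ 1 mod 3
  have hd3 : d % 3 = 1 := by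
    rcases (by omega : d % 3 = 0 ∨ d % 3 = 1 ∨ d % 3 = 2) with h | h | h
    · exfalso
      have hd' : (d : ZMod 3) = ((0 : ℤ) : ZMod 3) := (tr7 3 d 0).2 (by omega)
      have h3 := castEqn7 3 d a b (-1) hab
      rw [hd'] at h3
      revert h3
      have : ∀ x y : ZMod 3, x ^ 2 - ((0:ℤ) : ZMod 3) * y ^ 2 ≠ ((-1:ℤ) : ZMod 3) := by decide
      exact this a b
    · exact h
    · exfalso
      have h9 := castEqn7 9 d c e 6 hce
      have key : ∀ dm x y : ZMod 9, (dm = ((2:ℤ):ZMod 9) ∨ dm = ((5:ℤ):ZMod 9) ∨ dm = ((8:ℤ):ZMod 9)) →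
          x ^ 2 - dm * y ^ 2 ≠ ((6:ℤ) : ZMod 9) := by decide
      refine key (d : ZMod 9) c e ?_ h9
      rcases (by omega : d % 9 = 2 ∨ d % 9 = 5 ∨ d % 9 = 8) with h' | h' | h'
      · exact Or.inl ((tr7 9 d 2).2 (by omega))
      · exact Or.inr (Or.inl ((tr7 9 d 5).2 (by omega)))
      · exact Or.inr (Or.inr ((tr7 9 d 8).2 (by omega)))
  -- main part
  intro x y hxy
  have hd8' : (d : ZMod 8) = ((2 : ℤ) : ZMod 8) := (tr7 8 d 2).2 (by omega)
  have h8 := castEqn7 8 d x y (-6) hxy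
  rw [hd8'] at h8
  have key8 : ∀ x y : ZMod 8, x ^ 2 - ((2:ℤ):ZMod 8) * y ^ 2 = ((-6:ℤ):ZMod 8) →
      ((x = ((2:ℤ):ZMod 8) ∨ x = ((6:ℤ):ZMod 8)) ∧
       (y = ((1:ℤ):ZMod 8) ∨ y = ((3:ℤ):ZMod 8) ∨ y = ((5:ℤ):ZMod 8) ∨ y = ((7:ℤ):ZMod 8))) := by
    decide
  obtain ⟨hx8, hy8⟩ := key8 _ _ h8
  have hx8' : x % 8 = 2 ∨ x % 8 = 6 := by
    rcases hx8 with h | h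
    · exact Or.inl (by have := (tr7 8 x 2).1 h; omega)
    · exact Or.inr (by have := (tr7 8 x 6).1 h; omega)
  have hy8' : y % 8 = 1 ∨ y % 8 = 3 ∨ y % 8 = 5 ∨ y % 8 = 7 := by
    rcases hy8 with h | h | h | h
    · exact Or.inl (by have := (tr7 8 y 1).1 h; omega)
    · exact Or.inr (Or.inl (by have := (tr7 8 y 3).1 h; omega))
    · exact Or.inr (Or.inr (Or.inl (by have := (tr7 8 y 5).1 h; omega)))
    · exact Or.inr (Or.inr (Or.inr (by have := (tr7 8 y 7).1 h; omega)))
  -- mod 9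
  have h9 := castEqn7 9 d x y (-6) hxy
  have key9 : ∀ dm x y : ZMod 9, (dm = ((1:ℤ):ZMod 9) ∨ dm = ((4:ℤ):ZMod 9) ∨ dm = ((7:ℤ):ZMod 9)) →
      x ^ 2 - dm * y ^ 2 = ((-6:ℤ):ZMod 9) →
      (x ≠ ((0:ℤ):ZMod 9) ∧ x ≠ ((3:ℤ):ZMod 9) ∧ x ≠ ((6:ℤ):ZMod 9) ∧
       y ≠ ((0:ℤ):ZMod 9) ∧ y ≠ ((3:ℤ):ZMod 9) ∧ y ≠ ((6:ℤ):ZMod 9)) := by decide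
  have hdm9 : (d : ZMod 9) = ((1:ℤ):ZMod 9) ∨ (d : ZMod 9) = ((4:ℤ):ZMod 9) ∨ (d : ZMod 9) = ((7:ℤ):ZMod 9) := by
    rcases (by omega : d % 9 = 1 ∨ d % 9 = 4 ∨ d % 9 = 7) with h' | h' | h'
    · exact Or.inl ((tr7 9 d 1).2 (by omega))
    · exact Or.inr (Or.inl ((tr7 9 d 4).2 (by omega)))
    · exact Or.inr (Or.inr ((tr7 9 d 7).2 (by omega)))
  obtain ⟨hx0, hx3, hx6, hy0, hy3, hy6⟩ := key9 _ _ _ hdm9 h9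
  have hx9 : x % 9 ≠ 0 ∧ x % 9 ≠ 3 ∧ x % 9 ≠ 6 := by
    refine ⟨fun h => hx0 ((tr7 9 x 0).2 (by omega)), fun h => hx3 ((tr7 9 x 3).2 (by omega)),
      fun h => hx6 ((tr7 9 x 6).2 (by omega))⟩
  have hy9 : y % 9 ≠ 0 ∧ y % 9 ≠ 3 ∧ y % 9 ≠ 6 := by
    refine ⟨fun h => hy0 ((tr7 9 y 0).2 (by omega)), fun h => hy3 ((tr7 9 y 3).2 (by omega)),
      fun h => hy6 ((tr7 9 y 6).2 (by omega))⟩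
  constructor
  · omega
  · omega
end

section
/- Let d ≡ 2 (mod 4) be a square-free positive integer such that both x² − dy² = −1 and x² − dy² = 6 have integer solutions. Then d ≡ 10 (mod 48). -/
lemma sq16 : ∀ a : ZMod 16, a^2 ∈ ({0,1,4,9} : Finset (ZMod 16)) := by decide

set_option maxHeartbeats 4000000 in
lemma aux16 : ∀ g ∈ ({2,6,10,14} : Finset (ZMod 16)), ∀ s ∈ ({0,1,4,9} : Finset (ZMod 16)),
    ∀ t ∈ ({0,1,4,9} : Finset (ZMod 16)), ∀ u ∈ ({0,1,4,9} : Finset (ZMod 16)),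
    ∀ v ∈ ({0,1,4,9} : Finset (ZMod 16)),
    s - g*t = -1 → u - g*v = 6 → g = 10 := by decide

lemma sq9 : ∀ a : ZMod 9, a^2 ∈ ({0,1,4,7} : Finset (ZMod 9)) := by decide

set_option maxHeartbeats 4000000 in
lemma aux9 : ∀ g : ZMod 9, ∀ s ∈ ({0,1,4,7} : Finset (ZMod 9)),
    ∀ t ∈ ({0,1,4,7} : Finset (ZMod 9)), ∀ u ∈ ({0,1,4,7} : Finset (ZMod 9)),
    ∀ v ∈ ({0,1,4,7} : Finset (ZMod 9)),
    s - g*t = -1 → u - g*v = 6 → (g = 1 ∨ g = 4 ∨ g = 7) := by decide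

theorem stmt_8 (d : ℤ) (hd : d % 4 = 2) (hsf : Squarefree d) (hpos : 0 < d)
    (h1 : ∃ x y : ℤ, x ^ 2 - d * y ^ 2 = -1)
    (h6 : ∃ x y : ℤ, x ^ 2 - d * y ^ 2 = 6) :
    d % 48 = 10 := by
  obtain ⟨x1, y1, e1⟩ := h1
  obtain ⟨x2, y2, e2⟩ := h6
  -- cast to ZMod 16
  have c1 : ((x1 : ZMod 16))^2 - (d : ZMod 16) * ((y1 : ZMod 16))^2 = -1 := by
    have := congrArg (Int.cast : ℤ → ZMod 16) e1
    push_cast at this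
    exact this
  have c2 : ((x2 : ZMod 16))^2 - (d : ZMod 16) * ((y2 : ZMod 16))^2 = 6 := by
    have := congrArg (Int.cast : ℤ → ZMod 16) e2
    push_cast at this
    exact this
  have hmem : (d : ZMod 16) ∈ ({2,6,10,14} : Finset (ZMod 16)) := by
    have h : d % 16 = 2 ∨ d % 16 = 6 ∨ d % 16 = 10 ∨ d % 16 = 14 := by omega
    have key : ∀ k : ℤ, d % 16 = k → (d : ZMod 16) = ((k : ℤ) : ZMod 16) := by
      intro k hk
      rw [ZMod.intCast_eq_intCast_iff]
      show d % (16 : ℕ) = k % (16 : ℕ)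
      push_cast
      omega
    rcases h with h|h|h|h <;> rw [key _ h] <;> decide
  have h16 : (d : ZMod 16) = 10 :=
    aux16 _ hmem _ (sq16 x1) _ (sq16 y1) _ (sq16 x2) _ (sq16 y2) c1 c2
  have hd16 : d % 16 = 10 := by
    have : (d : ZMod 16) = ((10 : ℤ) : ZMod 16) := by rw [h16]; decide
    rw [ZMod.intCast_eq_intCast_iff] at this
    have h2 : d % (16 : ℕ) = 10 % (16 : ℕ) := this
    push_cast at h2
    omega
  -- cast to ZMod 9
  have d1 : ((x1 : ZMod 9))^2 - (d : ZMod 9) * ((y1 : ZMod 9))^2 = -1 := by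
    have := congrArg (Int.cast : ℤ → ZMod 9) e1
    push_cast at this
    exact this
  have d2 : ((x2 : ZMod 9))^2 - (d : ZMod 9) * ((y2 : ZMod 9))^2 = 6 := by
    have := congrArg (Int.cast : ℤ → ZMod 9) e2
    push_cast at this
    exact this
  have h9 : (d : ZMod 9) = 1 ∨ (d : ZMod 9) = 4 ∨ (d : ZMod 9) = 7 :=
    aux9 _ _ (sq9 x1) _ (sq9 y1) _ (sq9 x2) _ (sq9 y2) d1 d2
  have hd9 : d % 9 = 1 ∨ d % 9 = 4 ∨ d % 9 = 7 := by
    have key : ∀ k : ℤ, (d : ZMod 9) = ((k : ℤ) : ZMod 9) → d % 9 = k % 9 := by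
      intro k hk
      rw [ZMod.intCast_eq_intCast_iff] at hk
      have h2 : d % (9 : ℕ) = k % (9 : ℕ) := hk
      push_cast at h2
      omega
    rcases h9 with h|h|h
    · exact Or.inl (by have := key 1 (by rw [h]; decide); omega)
    · exact Or.inr (Or.inl (by have := key 4 (by rw [h]; decide); omega))
    · exact Or.inr (Or.inr (by have := key 7 (by rw [h]; decide); omega))
  omega
end

section
/- Let d ≡ 2 (mod 4) be a square-free positive integer such that the ring ℤ[√d] contains an element of norm −1 and an element of norm 6 (equivalently, x² − dy² = −1 and x² − dy² = 6 are solvable in integers). Then ℤ[√d] contains no element of norm 2 and no element of norm −2; that is, x² − dy² = ±2 has no integer solutions. -/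
lemma key16 : ∀ D : ZMod 16, (∃ x y : ZMod 16, x ^ 2 - D * y ^ 2 = -1) →
    (∃ x y : ZMod 16, x ^ 2 - D * y ^ 2 = 6) →
    (¬ ∃ x y : ZMod 16, x ^ 2 - D * y ^ 2 = 2) ∧
    (¬ ∃ x y : ZMod 16, x ^ 2 - D * y ^ 2 = -2) := by decide

theorem stmt_10 (d : ℤ) (hd : d % 4 = 2) (hsf : Squarefree d) (hpos : 0 < d)
    (h1 : ∃ x y : ℤ, x ^ 2 - d * y ^ 2 = -1)
    (h6 : ∃ x y : ℤ, x ^ 2 - d * y ^ 2 = 6) :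
    (¬ ∃ x y : ℤ, x ^ 2 - d * y ^ 2 = 2) ∧ (¬ ∃ x y : ℤ, x ^ 2 - d * y ^ 2 = -2) := by
  obtain ⟨x1, y1, e1⟩ := h1
  obtain ⟨x6, y6, e6⟩ := h6
  have c1 : ∃ x y : ZMod 16, x ^ 2 - (d : ZMod 16) * y ^ 2 = -1 :=
    ⟨x1, y1, by have := congrArg (fun z : ℤ => (z : ZMod 16)) e1; push_cast at this; exact this⟩
  have c6 : ∃ x y : ZMod 16, x ^ 2 - (d : ZMod 16) * y ^ 2 = 6 :=
    ⟨x6, y6, by have := congrArg (fun z : ℤ => (z : ZMod 16)) e6; push_cast at this; exact this⟩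
  obtain ⟨H2, H2'⟩ := key16 (d : ZMod 16) c1 c6
  constructor
  · rintro ⟨x, y, e⟩
    exact H2 ⟨x, y, by have := congrArg (fun z : ℤ => (z : ZMod 16)) e; push_cast at this; exact this⟩
  · rintro ⟨x, y, e⟩
    exact H2' ⟨x, y, by have := congrArg (fun z : ℤ => (z : ZMod 16)) e; push_cast at this; exact this⟩
end

section
/- Let d be a square-free positive integer with d ≡ 10 (mod 48). If m and k are integers such that (2m+1)² − d(2k+1)² = p for some prime p ≡ 3 (mod 4), then n = (4m + 2) + (4k + 2)√d cannot be written as a difference of two squares in ℤ[√d]. -/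
private lemma key_norm (j a b : ℤ) (ha : Even a) (hb : Odd b) :
    ∃ s : ℤ, a * a - (48 * j + 10) * (b * b) = 2 * s ∧ (s % 8 = 3 ∨ s % 8 = 5) := by
  obtain ⟨a', rfl⟩ := ha
  obtain ⟨c, rfl⟩ := hb
  obtain ⟨B, hB⟩ : ∃ B, c * c + c = 2 * B := by
    have h := Int.even_mul_succ_self c
    obtain ⟨B, hB⟩ := h
    exact ⟨B, by linarith [hB]⟩
  refine ⟨2 * (a' * a') - 192 * (j * B) - 24 * j - 40 * B - 5, by linear_combination (-(4 * (48 * j + 10))) * hB, ?_⟩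
  obtain ⟨w, hw⟩ : ∃ w, a' * a' = 4 * w ∨ a' * a' = 4 * w + 1 := by
    rcases Int.even_or_odd a' with ⟨u, rfl⟩ | ⟨u, rfl⟩
    · exact ⟨u * u, Or.inl (by ring)⟩
    · exact ⟨u * u + u, Or.inr (by ring)⟩
  obtain ⟨C, hC⟩ : ∃ C, j * B = C := ⟨_, rfl⟩
  rcases hw with h | h <;> rw [hC, h] <;> omega

theorem stmt_11 (d : ℤ) (hsf : Squarefree d) (hpos : 0 < d) (hd : d % 48 = 10)
    (m k : ℤ) (p : ℤ) (hp : Prime p) (hp3 : p % 4 = 3)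
    (hrep : (2 * m + 1) ^ 2 - d * (2 * k + 1) ^ 2 = p) :
    ¬ ∃ α β : ℤ√d, (⟨4 * m + 2, 4 * k + 2⟩ : ℤ√d) = α ^ 2 - β ^ 2 := by
  rintro ⟨α, β, h⟩
  obtain ⟨j, rfl⟩ : ∃ j, d = 48 * j + 10 := ⟨d / 48, by omega⟩
  have hprod : (⟨4 * m + 2, 4 * k + 2⟩ : ℤ√(48 * j + 10)) = (α + β) * (α - β) := by
    rw [h]; ring
  have hre : 4 * m + 2 = (α + β).re * (α - β).re
      + (48 * j + 10) * ((α + β).im * (α - β).im) := by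
    have := congrArg Zsqrtd.re hprod
    simpa [Zsqrtd.re_mul, mul_assoc] using this
  have him : 4 * k + 2 = (α + β).re * (α - β).im + (α + β).im * (α - β).re := by
    have := congrArg Zsqrtd.im hprod
    simpa [Zsqrtd.im_mul] using this
  have hsum : (α + β).re + (α - β).re = 2 * α.re := by
    simp [Zsqrtd.re_add, Zsqrtd.re_sub]; ring
  -- parity of the real parts
  obtain ⟨P, hP⟩ : ∃ P, (α + β).im * (α - β).im = P := ⟨_, rfl⟩
  rw [hP] at hre
  obtain ⟨R, hR⟩ : ∃ R, j * P = R := ⟨_, rfl⟩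
  have hre2 : 4 * m + 2 = (α + β).re * (α - β).re + 48 * R + 10 * P := by
    rw [← hR]; linear_combination hre
  have heven : Even (α + β).re ∧ Even (α - β).re := by
    rcases Int.even_or_odd (α + β).re with ⟨x, hx⟩ | ⟨x, hx⟩
    · refine ⟨⟨x, hx⟩, ⟨α.re - x, by omega⟩⟩
    · exfalso
      obtain ⟨y, hy⟩ : Odd (α - β).re := ⟨α.re - x - 1, by omega⟩
      have hodd : (α + β).re * (α - β).re = 4 * (x * y) + 2 * x + 2 * y + 1 := by
        rw [hx, hy]; ring
      obtain ⟨Q, hQ⟩ : ∃ Q, x * y = Q := ⟨_, rfl⟩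
      rw [hodd, hQ] at hre2
      omega
  obtain ⟨⟨x, hx⟩, ⟨y, hy⟩⟩ := heven
  -- oddness of the imaginary parts
  have hPodd : P % 2 = 1 := by
    have : (α + β).re * (α - β).re = 4 * (x * y) := by rw [hx, hy]; ring
    obtain ⟨Q, hQ⟩ : ∃ Q, x * y = Q := ⟨_, rfl⟩
    rw [this, hQ] at hre2
    omega
  have him_odd : Odd ((α + β).im * (α - β).im) := by
    rw [hP, Int.odd_iff]; exact hPodd
  rw [Int.odd_mul] at him_odd
  -- norms
  obtain ⟨s, hs, hs8⟩ := key_norm j (α + β).re (α + β).im ⟨x, hx⟩ him_odd.1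
  obtain ⟨t, ht, ht8⟩ := key_norm j (α - β).re (α - β).im ⟨y, hy⟩ him_odd.2
  have hnorm : Zsqrtd.norm (α + β) * Zsqrtd.norm (α - β) = 4 * p := by
    rw [← Zsqrtd.norm_mul, ← hprod, Zsqrtd.norm_def]
    linear_combination 4 * hrep
  rw [Zsqrtd.norm_def, Zsqrtd.norm_def] at hnorm
  have h4 : (2 * s) * (2 * t) = 4 * p := by rw [← hs, ← ht]; linear_combination hnorm
  have hst : s * t = p := by linarith
  have := hp.irreducible.isUnit_or_isUnit (show p = s * t from hst.symm)
  rcases this with hu | hu <;> rw [Int.isUnit_iff] at hu <;> omega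
end

section
/- Let d ≡ 2 (mod 4) be a square-free positive integer such that x² − dy² = −1 and x² − dy² = 6 are solvable in integers. Then for every n of the form (4m + 2) + (4k + 2)√d with m, k ∈ ℤ, there exist infinitely many quadruples in ℤ[√d] with the property D(n). -/
set_option maxHeartbeats 1000000 in
theorem stmt_14 (d : ℤ) (hd : d % 4 = 2) (hsf : Squarefree d) (hpos : 0 < d)
    (h1 : ∃ x y : ℤ, x ^ 2 - d * y ^ 2 = -1)
    (h6 : ∃ x y : ℤ, x ^ 2 - d * y ^ 2 = 6)
    (m k : ℤ) (n : ℤ√d) (hn : n = ⟨4 * m + 2, 4 * k + 2⟩) :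
    {s : Finset (ℤ√d) | s.card = 4 ∧ (0 : ℤ√d) ∉ s ∧
      ∀ x ∈ s, ∀ y ∈ s, x ≠ y → IsSquare (x * y + n)}.Infinite := by
  classical
  obtain ⟨e, he⟩ : ∃ e : ℤ, d = 4 * e + 2 := ⟨d / 4, by omega⟩
  obtain ⟨x, y, hxy⟩ := h6
  obtain ⟨u0, v0, huv0⟩ := h1
  have huv : |u0| ^ 2 - d * |v0| ^ 2 = -1 := by rw [sq_abs, sq_abs]; exact huv0
  set u : ℤ := |u0| with hu_def
  set v : ℤ := |v0| with hv_def
  -- x is even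
  obtain ⟨x', rfl⟩ : ∃ x', x = 2 * x' := by
    rcases Int.even_or_odd x with ⟨t, ht⟩ | ⟨t, ht⟩
    · exact ⟨t, by omega⟩
    · exfalso
      have h2 : (2:ℤ) ∣ 1 := ⟨(2*e+1)*y^2 + 3 - 2*t^2 - 2*t,
        by linear_combination hxy + y^2*he - (x + 2*t + 1)*ht⟩
      norm_num at h2
  -- y is odd
  obtain ⟨y', hy'⟩ : ∃ y', y = 2 * y' + 1 := by
    rcases Int.even_or_odd y with ⟨t, ht⟩ | ⟨t, ht⟩
    · exfalso
      have h2 : (4:ℤ) ∣ 6 := ⟨x'^2 - 4*e*t^2 - 2*t^2,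
        by linear_combination -hxy - y^2*he - (4*e+2)*(y + 2*t)*ht⟩
      norm_num at h2
    · exact ⟨t, by omega⟩
  -- u is odd
  obtain ⟨a, hua⟩ : ∃ a, u = 2 * a + 1 := by
    rcases Int.even_or_odd u with ⟨t, ht⟩ | ⟨t, ht⟩
    · exfalso
      have h2 : (2:ℤ) ∣ 1 := ⟨(2*e+1)*v^2 - 2*t^2,
        by linear_combination huv + v^2*he - (u + 2*t)*ht⟩
      norm_num at h2
    · exact ⟨t, by omega⟩
  -- v is odd
  obtain ⟨b, hvb⟩ : ∃ b, v = 2 * b + 1 := by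
    rcases Int.even_or_odd v with ⟨t, ht⟩ | ⟨t, ht⟩
    · exfalso
      have h2 : (4:ℤ) ∣ 2 := ⟨-(a^2 + a - (4*e+2)*t^2),
        by linear_combination huv + v^2*he - (u + 2*a + 1)*hua + (4*e+2)*(v + 2*t)*ht⟩
      norm_num at h2
    · exact ⟨t, by omega⟩
  have hu1 : 1 ≤ u := by have := abs_nonneg u0; omega
  have hv1 : 1 ≤ v := by have := abs_nonneg v0; omega
  clear_value u v
  -- cancellation of integer scalars in ℤ√d
  have hcan : ∀ (g : ℤ) (z z' : ℤ√d), g ≠ 0 → (g : ℤ√d) * z = (g : ℤ√d) * z' → z = z' := by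
    intro g z z' hg h
    have h1 := congrArg Zsqrtd.re h
    have h2 := congrArg Zsqrtd.im h
    simp only [Zsqrtd.re_mul, Zsqrtd.im_mul, Zsqrtd.re_intCast, Zsqrtd.im_intCast,
      zero_mul, mul_zero, add_zero, zero_add] at h1 h2
    ext
    · exact mul_left_cancel₀ hg h1
    · exact mul_left_cancel₀ hg h2
  -- basic elements
  set w : ℤ√d := ⟨u, v⟩ with hw_def
  have hw : w * star w = -1 := by
    ext
    · simpa [hw_def] using by linear_combination huv
    · simp [hw_def]; ring
  set B : ℤ√d := ⟨2 * x', y⟩ with hB_def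
  have hB : B * star B = 6 := by
    ext
    · simpa [hB_def] using by linear_combination hxy
    · simp [hB_def]; ring
  set N' : ℤ√d := ⟨2 * m + 1, 2 * k + 1⟩ with hN_def
  have hnN : n = 2 * N' := by
    rw [hn]; ext <;> simp [hN_def] <;> ring
  set c : ℤ√d := ⟨2 * x' * (m + 1) - (2 * e + 1) * y * (2 * k + 1), x' * (2 * k + 1) - m * y⟩
    with hc_def
  set s : ℤ√d := ⟨(2 * e + 1) * y * (2 * k + 1) - 2 * x' * m, y * (m + 1) - x' * (2 * k + 1)⟩
    with hs_def
  have h2c : 2 * c = B + star B * N' := by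
    ext <;> simp [hc_def, hB_def, hN_def] <;> (try rw [he]) <;> ring
  have h2s : 2 * s = B - star B * N' := by
    ext <;> simp [hs_def, hB_def, hN_def] <;> (try rw [he]) <;> ring
  have hcs : c ^ 2 - s ^ 2 = 3 * n := by
    apply hcan 4 _ _ (by norm_num)
    push_cast
    linear_combination (2*c + B + star B * N') * h2c - (2*s + B - star B * N') * h2s
      + (4*N') * hB - 12 * hnN
  set D : ℤ√d := c ^ 2 - 4 * n with hD_def
  -- the unit T = w^4 is ≡ 1 mod 4
  set z₁ : ℤ√d := ⟨2*a^2 + 2*a + (2*e+1)*(4*b^2 + 4*b) + 2*e + 1, u*v⟩ with hz1_def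
  have hz1 : w ^ 2 - 1 = 2 * z₁ := by
    ext <;> simp [pow_two, hw_def, hz1_def] <;> (try rw [he, hua, hvb]) <;> ring
  set T : ℤ√d := w ^ 4 with hT_def
  have hTs : T * star T = 1 := by
    rw [hT_def, star_pow, ← mul_pow, hw]
    norm_num
  have hT1 : (4 : ℤ√d) ∣ T - 1 := ⟨z₁ * (z₁ + 1), by
    rw [hT_def]
    linear_combination (w^2 + 1 + 2*z₁) * hz1⟩
  -- parity of c.re
  set E : ℤ := 4*e*y'*k + 2*e*y' + 2*e*k + e + 2*y'*k + y' + k with hE_def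
  have hcre : c.re = 2*(x'*(m+1) - E) - 1 := by
    simp only [hc_def]
    show 2*x'*(m+1) - (2*e+1)*y*(2*k+1) = _
    rw [hy', hE_def]; ring
  obtain ⟨g, hg⟩ : ∃ g, c.re = 2 * g - 1 := ⟨x'*(m+1) - E, hcre⟩
  clear_value c s E z₁
  -- choice of the unit ε (and its inverse η) according to the parity of c.im
  obtain ⟨ε, η, hεη, hεw, hC1, hC2⟩ :
      ∃ ε η : ℤ√d, ε * η = 1 ∧ (ε = 1 ∨ ε = w) ∧ ((4:ℤ√d) ∣ ε - D * η) ∧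
        ((4:ℤ√d) ∣ ε + D * η - 2 * c) := by
    have hwre : w.re = u := rfl
    have hwim : w.im = v := rfl
    rcases Int.even_or_odd (c.im) with ⟨ci, hci⟩ | ⟨ci, hci⟩
    · set z : ℤ√d := ⟨g - 1, ci⟩ with hz_def
      have hz : c - 1 = 2 * z := by
        ext <;>
          simp only [hz_def, Zsqrtd.re_sub, Zsqrtd.im_sub, Zsqrtd.re_mul, Zsqrtd.im_mul,
            Zsqrtd.re_ofNat, Zsqrtd.im_ofNat, Zsqrtd.re_one, Zsqrtd.im_one] <;>
          omega
      refine ⟨1, 1, one_mul 1, Or.inl rfl, ⟨n - z*(z+1), ?_⟩, ⟨z^2 - n, ?_⟩⟩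
      · linear_combination -hD_def - (c + 1 + 2*z) * hz
      · linear_combination hD_def + (c - 1 + 2*z) * hz
    · set z : ℤ√d := ⟨g - 1 - a, ci - b⟩ with hz_def
      have hz : c - w = 2 * z := by
        ext <;>
          simp only [hz_def, hwre, hwim, Zsqrtd.re_sub, Zsqrtd.im_sub, Zsqrtd.re_mul,
            Zsqrtd.im_mul, Zsqrtd.re_ofNat, Zsqrtd.im_ofNat] <;>
          omega
      refine ⟨w, -star w, by rw [mul_neg, hw]; ring, Or.inr rfl,
        ⟨(w*z + z^2 - n) * star w, ?_⟩, ⟨-z - (w*z + z^2 - n) * star w, ?_⟩⟩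
      · linear_combination (star w) * hD_def + (star w) * (c + w + 2*z) * hz + w * hw
      · linear_combination (-star w) * hD_def - (star w) * (c + w + 2*z) * hz - 2*hz - w*hw
  -- powers of T are ≡ 1 mod 4
  have hTj1 : ∀ j : ℕ, (4:ℤ√d) ∣ T ^ j - 1 := by
    intro j
    have h' := sub_dvd_pow_sub_pow T 1 j
    rw [one_pow] at h'
    exact dvd_trans hT1 h'
  have hTsj : ∀ j : ℕ, (4:ℤ√d) ∣ star (T ^ j) - 1 := by
    intro j
    obtain ⟨t₀, ht₀⟩ := hTj1 j
    refine ⟨star t₀, ?_⟩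
    have h' := congrArg star ht₀
    simpa [star_sub, star_mul, mul_comm] using h'
  have hTT : ∀ j : ℕ, T ^ j * star (T ^ j) = 1 := by
    intro j
    rw [star_pow, ← mul_pow, hTs, one_pow]
  set μ : ℕ → ℤ√d := fun j => ε * T ^ j with hμ_def
  set ν : ℕ → ℤ√d := fun j => D * η * star (T ^ j) with hν_def
  have hμν : ∀ j : ℕ, μ j * ν j = D := by
    intro j
    have h' : μ j * ν j = D * (ε * η) * (T ^ j * star (T ^ j)) := by
      simp only [hμ_def, hν_def]; ring
    rw [h', hεη, hTT j, mul_one, mul_one]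
  have key : ∀ j : ℕ, ∃ P Q r tμ tν uμ uν : ℤ√d,
      4*P = μ j + ν j + 2*c ∧ 4*Q = μ j + ν j - 2*c ∧ 4*r = ν j - μ j ∧
      4*tμ = 2*(μ j) + 2*c ∧ 4*tν = 2*(ν j) + 2*c ∧
      4*uμ = 2*(μ j) - 2*c ∧ 4*uν = 2*(ν j) - 2*c := by
    intro j
    obtain ⟨p₁, hp₁⟩ := hTj1 j
    obtain ⟨p₂, hp₂⟩ := hTsj j
    obtain ⟨q₁, hq₁⟩ := hC1
    obtain ⟨q₂, hq₂⟩ := hC2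
    refine ⟨ε*p₁ + D*η*p₂ + q₂ + c, ε*p₁ + D*η*p₂ + q₂, -(ε*p₁ - D*η*p₂ + q₁),
      2*ε*p₁ + q₁ + q₂ + c, 2*D*η*p₂ - q₁ + q₂ + c, 2*ε*p₁ + q₁ + q₂, 2*D*η*p₂ - q₁ + q₂,
      ?_, ?_, ?_, ?_, ?_, ?_, ?_⟩
    · simp only [hμ_def, hν_def]
      linear_combination -ε*hp₁ - D*η*hp₂ - hq₂
    · simp only [hμ_def, hν_def]
      linear_combination -ε*hp₁ - D*η*hp₂ - hq₂
    · simp only [hμ_def, hν_def]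
      linear_combination ε*hp₁ - D*η*hp₂ + hq₁
    · simp only [hμ_def, hν_def]
      linear_combination -2*ε*hp₁ - hq₁ - hq₂
    · simp only [hμ_def, hν_def]
      linear_combination -2*D*η*hp₂ + hq₁ - hq₂
    · simp only [hμ_def, hν_def]
      linear_combination -2*ε*hp₁ - hq₁ - hq₂
    · simp only [hμ_def, hν_def]
      linear_combination -2*D*η*hp₂ + hq₁ - hq₂
  choose P Q r tμ tν uμ uν hP hQ hr htμ htν huμ huν using key
  have sqPQ : ∀ j, P j * Q j + n = r j * r j := by
    intro j
    apply hcan 16 _ _ (by norm_num)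
    push_cast
    linear_combination (4*Q j)*(hP j) + (μ j + ν j + 2*c)*(hQ j)
      - (4*r j + (ν j - μ j))*(hr j) + 4*(hμν j) + 4*hD_def
  have sqPμ : ∀ j, P j * μ j + n = tμ j * tμ j := by
    intro j
    apply hcan 16 _ _ (by norm_num)
    push_cast
    linear_combination (4*μ j)*(hP j) + 4*(hμν j) + 4*hD_def
      - (4*tμ j + 2*(μ j) + 2*c)*(htμ j)
  have sqQμ : ∀ j, Q j * μ j + n = uμ j * uμ j := by
    intro j
    apply hcan 16 _ _ (by norm_num)
    push_cast
    linear_combination (4*μ j)*(hQ j) + 4*(hμν j) + 4*hD_def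
      - (4*uμ j + 2*(μ j) - 2*c)*(huμ j)
  have sqPν : ∀ j, P j * ν j + n = tν j * tν j := by
    intro j
    apply hcan 16 _ _ (by norm_num)
    push_cast
    linear_combination (4*ν j)*(hP j) + 4*(hμν j) + 4*hD_def
      - (4*tν j + 2*(ν j) + 2*c)*(htν j)
  have sqQν : ∀ j, Q j * ν j + n = uν j * uν j := by
    intro j
    apply hcan 16 _ _ (by norm_num)
    push_cast
    linear_combination (4*ν j)*(hQ j) + 4*(hμν j) + 4*hD_def
      - (4*uν j + 2*(ν j) - 2*c)*(huν j)
  have sqμν : ∀ j, μ j * ν j + n = s * s := by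
    intro j
    linear_combination hμν j + hD_def + hcs
  -- the real embedding
  set φ : ℤ√d →+* ℝ := Zsqrtd.toReal (le_of_lt hpos) with hφ_def
  have hφinj : Function.Injective φ := by
    rw [hφ_def]
    refine Zsqrtd.toReal_injective _ (fun t ht => ?_)
    rcases Int.even_or_odd t with ⟨i, hi⟩ | ⟨i, hi⟩
    · obtain ⟨B2, hB2⟩ : ∃ B2, t*t = 4*B2 := ⟨i*i, by rw [hi]; ring⟩
      omega
    · obtain ⟨B2, hB2⟩ : ∃ B2, t*t = 4*B2+1 := ⟨i*i+i, by rw [hi]; ring⟩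
      omega
  have hφ0 : ∀ z : ℤ√d, z ≠ 0 → φ z ≠ 0 := by
    intro z hz h0
    exact hz (hφinj (by rw [h0, map_zero]))
  have hφap : ∀ z : ℤ√d, φ z = (z.re : ℝ) + (z.im : ℝ) * Real.sqrt (d : ℝ) := by
    intro z
    rw [hφ_def]
    rfl
  have h2d : (2:ℤ) ≤ d := by omega
  have hsd1 : (1:ℝ) < Real.sqrt (d:ℝ) := by
    rw [show (1:ℝ) = Real.sqrt 1 by simp]
    apply Real.sqrt_lt_sqrt (by norm_num)
    exact_mod_cast h2d
  have hwre : w.re = u := rfl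
  have hwim : w.im = v := rfl
  have hφw2 : 2 < φ w := by
    rw [hφap w, hwre, hwim]
    have hh1 : (1:ℝ) ≤ (u:ℝ) := by exact_mod_cast hu1
    have hh2 : (1:ℝ) ≤ (v:ℝ) := by exact_mod_cast hv1
    nlinarith
  set W : ℝ := φ T with hW_def
  have hWval : W = (φ w)^4 := by rw [hW_def, hT_def, map_pow]
  have hW16 : 16 < W := by
    rw [hWval]
    have hh1 : (4:ℝ) < (φ w)^2 := by nlinarith [hφw2]
    calc (16:ℝ) < (φ w)^2 * (φ w)^2 := by nlinarith [hh1]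
    _ = (φ w)^4 := by ring
  have hW1 : (1:ℝ) < W := by linarith
  have hWpos : (0:ℝ) < W := by linarith
  have hWs : ∀ j : ℕ, φ (star (T ^ j)) * W ^ j = 1 := by
    intro j
    rw [hW_def, ← map_pow, ← map_mul, mul_comm (star (T ^ j)), hTT j, map_one]
  have hφμ : ∀ j : ℕ, φ (μ j) = φ ε * W ^ j := by
    intro j
    rw [hμ_def, hW_def]
    simp [map_mul, map_pow]
  have hφν : ∀ j : ℕ, φ (ν j) * W ^ j = φ (D * η) := by
    intro j
    rw [hν_def]
    show φ (D * η * star (T ^ j)) * W ^ j = _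
    rw [map_mul, mul_assoc, hWs j, mul_one]
  have haε : 1 ≤ φ ε := by
    rcases hεw with h | h
    · rw [h, map_one]
    · rw [h]; linarith
  have hD0 : D ≠ 0 := by
    intro h0
    have hc2 : c ^ 2 = 4 * n := by linear_combination -hD_def + h0
    have him := congrArg Zsqrtd.im hc2
    have hre := congrArg Zsqrtd.re hc2
    rw [hn] at him hre
    simp only [pow_two, Zsqrtd.im_mul, Zsqrtd.re_mul, Zsqrtd.re_ofNat, Zsqrtd.im_ofNat,
      zero_mul, mul_zero, add_zero, zero_add] at him hre
    push_cast at him hre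
    obtain ⟨ci, hci⟩ : ∃ ci, c.im = 2*ci := by
      have hev : Even (c.re * c.im) := ⟨4*k+2, by linarith⟩
      rcases Int.even_mul.mp hev with h | h
      · obtain ⟨t, ht⟩ := h; omega
      · obtain ⟨t, ht⟩ := h; exact ⟨t, by omega⟩
    rw [hci, hg, he] at hre
    obtain ⟨Gg, hGg⟩ : ∃ t, g*g = t := ⟨_, rfl⟩
    obtain ⟨Ci, hCi⟩ : ∃ t, ci*ci = t := ⟨_, rfl⟩
    obtain ⟨Ei, hEi⟩ : ∃ t, e*(ci*ci) = t := ⟨_, rfl⟩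
    have hre' : (4:ℤ)*Gg - 4*g + 1 + 16*Ei + 8*Ci = 4*(4*m + 2) := by
      linear_combination hre - 4*hGg - 8*hCi - 16*hEi
    omega
  have hc0 : c ≠ 0 := by
    intro h0
    have h1 := congrArg Zsqrtd.re h0
    rw [hg] at h1
    simp only [Zsqrtd.re_zero] at h1
    omega
  have hbb : φ (D * η) ≠ 0 := by
    rw [map_mul]
    refine mul_ne_zero (hφ0 D hD0) ?_
    intro h0
    have h1 : φ ε * φ η = 1 := by rw [← map_mul, hεη, map_one]
    rw [h0, mul_zero] at h1
    norm_num at h1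
  set Ca : ℝ := |φ c| with hCa_def
  set Cb : ℝ := |φ (D * η)| with hCb_def
  have hCb0 : 0 < Cb := abs_pos.mpr hbb
  have hCa0 : 0 ≤ Ca := abs_nonneg _
  obtain ⟨J, hJ⟩ : ∃ J : ℕ, 3*Cb + 2*Ca + 1 < W ^ J := pow_unbounded_of_one_lt _ hW1
  have hAbound : ∀ j : ℕ, J ≤ j → 3*Cb + 2*Ca + 1 < φ ε * W ^ j := by
    intro j hj
    have h1 : W ^ J ≤ W ^ j := pow_le_pow_right₀ hW1.le hj
    have h2 : 0 < W ^ j := pow_pos hWpos j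
    have h3 : W ^ j ≤ φ ε * W ^ j := le_mul_of_one_le_left h2.le haε
    linarith
  have hνabs : ∀ j : ℕ, |φ (ν j)| ≤ Cb := by
    intro j
    have h1 := hφν j
    have h2 : (1:ℝ) ≤ W ^ j := by
      simpa using pow_le_pow_right₀ hW1.le (Nat.zero_le j)
    have h3 : |φ (ν j)| * W ^ j = Cb := by
      rw [hCb_def, ← h1, abs_mul, abs_of_pos (pow_pos hWpos j)]
    have h4 : |φ (ν j)| ≤ |φ (ν j)| * W ^ j := le_mul_of_one_le_right (abs_nonneg _) h2
    linarith
  have hφP : ∀ j, 4 * φ (P j) = φ (μ j) + φ (ν j) + 2 * φ c := by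
    intro j
    have h0 := congrArg φ (hP j)
    simp only [map_add, map_mul, map_ofNat] at h0
    linarith
  have hφQ : ∀ j, 4 * φ (Q j) = φ (μ j) + φ (ν j) - 2 * φ c := by
    intro j
    have h0 := congrArg φ (hQ j)
    simp only [map_add, map_sub, map_mul, map_ofNat] at h0
    linarith
  have main : ∀ j : ℕ, J ≤ j →
      (P j ≠ Q j ∧ P j ≠ μ j ∧ P j ≠ ν j ∧ Q j ≠ μ j ∧ Q j ≠ ν j ∧ μ j ≠ ν j) ∧
      (P j ≠ 0 ∧ Q j ≠ 0 ∧ μ j ≠ 0 ∧ ν j ≠ 0) := by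
    intro j hj
    have hA := hAbound j hj
    have hB := hνabs j
    have hμj := hφμ j
    have hPj := hφP j
    have hQj := hφQ j
    have hb1 : φ (ν j) ≤ Cb := le_trans (le_abs_self _) hB
    have hb2 : -Cb ≤ φ (ν j) := by have := neg_abs_le (φ (ν j)); linarith
    have hc1 : φ c ≤ Ca := le_abs_self _
    have hc2 : -Ca ≤ φ c := neg_abs_le _
    refine ⟨⟨?_, ?_, ?_, ?_, ?_, ?_⟩, ?_, ?_, ?_, ?_⟩
    · intro h0
      apply hc0
      apply hcan 4 c 0 (by norm_num)
      push_cast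
      linear_combination -(hP j) + (hQ j) + 4*h0
    · intro h0
      have hφh := congrArg φ h0
      rw [hμj] at hφh
      linarith
    · intro h0
      have hφh := congrArg φ h0
      rw [hμj] at hPj
      linarith
    · intro h0
      have hφh := congrArg φ h0
      rw [hμj] at hφh
      linarith
    · intro h0
      have hφh := congrArg φ h0
      rw [hμj] at hQj
      linarith
    · intro h0
      have hφh := congrArg φ h0
      rw [hμj] at hφh
      linarith
    · intro h0
      have hφh := congrArg φ h0
      rw [map_zero] at hφh
      rw [hμj] at hPj
      linarith
    · intro h0
      have hφh := congrArg φ h0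
      rw [map_zero] at hφh
      rw [hμj] at hQj
      linarith
    · intro h0
      have hφh := congrArg φ h0
      rw [map_zero, hμj] at hφh
      linarith
    · intro h0
      have hφh := congrArg φ h0
      rw [map_zero] at hφh
      have hz1' := hφν j
      rw [hφh, zero_mul] at hz1'
      exact hbb hz1'.symm
  have hsum : ∀ j : ℕ, J ≤ j →
      (∑ z ∈ ({P j, Q j, μ j, ν j} : Finset (ℤ√d)), φ z)
        = (3/2) * (φ ε * W ^ j + φ (ν j)) := by
    intro j hj
    obtain ⟨⟨h1, h2, h3, h4, h5, h6⟩, -⟩ := main j hj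
    rw [Finset.sum_insert (by
        simp only [Finset.mem_insert, Finset.mem_singleton]
        push_neg
        exact ⟨h1, h2, h3⟩),
      Finset.sum_insert (by
        simp only [Finset.mem_insert, Finset.mem_singleton]
        push_neg
        exact ⟨h4, h5⟩),
      Finset.sum_insert (by
        simp only [Finset.mem_singleton]
        exact h6),
      Finset.sum_singleton]
    have hPj := hφP j
    have hQj := hφQ j
    have hμj := hφμ j
    linarith
  have hmono : ∀ j j' : ℕ, J ≤ j → j < j' →
      φ ε * W ^ j + φ (ν j) < φ ε * W ^ j' + φ (ν j') := by
    intro j j' hj hlt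
    have hA := hAbound j hj
    have hB := hνabs j
    have hB' := hνabs j'
    have h1 : W ^ (j+1) ≤ W ^ j' := pow_le_pow_right₀ hW1.le hlt
    have h3 : 0 < W ^ j := pow_pos hWpos j
    have hεpos : (0:ℝ) < φ ε := by linarith
    have h4 : φ ε * W ^ (j+1) ≤ φ ε * W ^ j' :=
      mul_le_mul_of_nonneg_left h1 hεpos.le
    have h5 : φ ε * W ^ (j+1) = (φ ε * W ^ j) * W := by rw [pow_succ]; ring
    have hApos : 0 < φ ε * W ^ j := mul_pos hεpos h3
    have h6 : (φ ε * W ^ j) * 16 ≤ (φ ε * W ^ j) * W :=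
      mul_le_mul_of_nonneg_left hW16.le hApos.le
    have hb1 : φ (ν j) ≤ Cb := le_trans (le_abs_self _) hB
    have hb2 : -Cb ≤ φ (ν j') := by have := neg_abs_le (φ (ν j')); linarith
    linarith
  apply Set.infinite_of_injective_forall_mem
    (f := fun i : ℕ => ({P (J+i), Q (J+i), μ (J+i), ν (J+i)} : Finset (ℤ√d)))
  · intro i i' h0
    by_contra hne
    have h0' : ({P (J+i), Q (J+i), μ (J+i), ν (J+i)} : Finset (ℤ√d))
        = {P (J+i'), Q (J+i'), μ (J+i'), ν (J+i')} := h0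
    have hs1 := hsum (J+i) (Nat.le_add_right J i)
    have hs2 := hsum (J+i') (Nat.le_add_right J i')
    rw [h0'] at hs1
    rw [hs2] at hs1
    rcases lt_trichotomy i i' with hlt | heq | hlt
    · have := hmono (J+i) (J+i') (Nat.le_add_right J i) (by omega)
      linarith
    · exact hne heq
    · have := hmono (J+i') (J+i) (Nat.le_add_right J i') (by omega)
      linarith
  · intro i
    have hj : J ≤ J + i := Nat.le_add_right J i
    obtain ⟨⟨h1, h2, h3, h4, h5, h6⟩, hP0, hQ0, hμ0, hν0⟩ := main (J+i) hj
    refine ⟨?_, ?_, ?_⟩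
    · rw [Finset.card_insert_of_notMem (by
          simp only [Finset.mem_insert, Finset.mem_singleton]
          push_neg
          exact ⟨h1, h2, h3⟩),
        Finset.card_insert_of_notMem (by
          simp only [Finset.mem_insert, Finset.mem_singleton]
          push_neg
          exact ⟨h4, h5⟩),
        Finset.card_insert_of_notMem (by
          simp only [Finset.mem_singleton]
          exact h6),
        Finset.card_singleton]
    · simp only [Finset.mem_insert, Finset.mem_singleton]
      push_neg
      exact ⟨fun h => hP0 h.symm, fun h => hQ0 h.symm, fun h => hμ0 h.symm,
        fun h => hν0 h.symm⟩
    · intro z hz z' hz' hzz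
      simp only [Finset.mem_insert, Finset.mem_singleton] at hz hz'
      rcases hz with rfl | rfl | rfl | rfl <;> rcases hz' with rfl | rfl | rfl | rfl
      · exact absurd rfl hzz
      · exact ⟨r (J+i), sqPQ (J+i)⟩
      · exact ⟨tμ (J+i), sqPμ (J+i)⟩
      · exact ⟨tν (J+i), sqPν (J+i)⟩
      · exact ⟨r (J+i), by rw [mul_comm]; exact sqPQ (J+i)⟩
      · exact absurd rfl hzz
      · exact ⟨uμ (J+i), sqQμ (J+i)⟩
      · exact ⟨uν (J+i), sqQν (J+i)⟩
      · exact ⟨tμ (J+i), by rw [mul_comm]; exact sqPμ (J+i)⟩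
      · exact ⟨uμ (J+i), by rw [mul_comm]; exact sqQμ (J+i)⟩
      · exact absurd rfl hzz
      · exact ⟨s, sqμν (J+i)⟩
      · exact ⟨tν (J+i), by rw [mul_comm]; exact sqPν (J+i)⟩
      · exact ⟨uν (J+i), by rw [mul_comm]; exact sqQν (J+i)⟩
      · exact ⟨s, by rw [mul_comm]; exact sqμν (J+i)⟩
      · exact absurd rfl hzz
end

section
/- The element 26 + 6√10 cannot be written as α² − β² with α, β ∈ ℤ[√10]. -/
lemma aux16_s16 (a b c d : ℤ) (e1 : a^2 + 10*b^2 - c^2 - 10*d^2 = 26)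
    (e2 : a*b - c*d = 3) : False := by
  set p := a + c with hpdef
  set q := b + d with hqdef
  set r := a - c with hrdef
  set s := b - d with hsdef
  have h1 : p*r + 10*(q*s) = 26 := by rw [hpdef, hqdef, hrdef, hsdef]; linear_combination e1
  have h2 : p*s + q*r = 6 := by rw [hpdef, hqdef, hrdef, hsdef]; linear_combination 2*e2
  have hN : (p^2 - 10*q^2) * (r^2 - 10*s^2) = 316 := by
    linear_combination (p*r + 10*(q*s) + 26)*h1 - 10*(p*s + q*r + 6)*h2
  rcases Int.even_or_odd p with hp | hp
  · -- p even, so r even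
    have hr : Even r := by
      obtain ⟨k, hk⟩ := hp
      exact ⟨k - c, by omega⟩
    obtain ⟨p1, hp1⟩ := hp
    obtain ⟨r1, hr1⟩ := hr
    rcases Int.even_or_odd q with hq | hq
    · -- q even, so s even ⇒ 4 ∣ 26, contradiction
      have hs : Even s := by
        obtain ⟨k, hk⟩ := hq
        exact ⟨k - d, by omega⟩
      obtain ⟨q1, hq1⟩ := hq
      obtain ⟨s1, hs1⟩ := hs
      rw [hp1, hq1, hr1, hs1] at h1
      have : (4:ℤ) ∣ 26 := ⟨p1*r1 + 10*(q1*s1), by linear_combination -h1⟩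
      norm_num at this
    · -- q odd, so s odd
      have hs : Odd s := by
        obtain ⟨k, hk⟩ := hq
        exact ⟨k - d, by omega⟩
      rw [hp1, hr1] at hN
      set m := 2*p1^2 - 5*q^2 with hmdef
      set n := 2*r1^2 - 5*s^2 with hndef
      have h4 : (4:ℤ) * (m * n) = 4 * 79 := by
        rw [hmdef, hndef]; linear_combination hN
      have hmn : m * n = 79 := mul_left_cancel₀ (by norm_num) h4
      have hdvd : m ∣ 79 := ⟨n, hmn.symm⟩
      have hnat : m.natAbs ∣ 79 := by
        have : m.natAbs ∣ (79:ℤ).natAbs := Int.natAbs_dvd_natAbs.mpr hdvd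
        simpa using this
      have h79 : Nat.Prime 79 := by norm_num
      have habs : m.natAbs = 1 ∨ m.natAbs = 79 := h79.eq_one_or_self_of_dvd _ hnat
      have hm4 : m = 1 ∨ m = -1 ∨ m = 79 ∨ m = -79 := by
        rcases Int.natAbs_eq m with h | h <;> rcases habs with h' | h' <;> omega
      obtain ⟨k, hk⟩ := hq
      have hz : (m : ZMod 8) = 2*(p1:ZMod 8)^2 - 5*(2*(k:ZMod 8)+1)^2 := by
        rw [hmdef, hk]; push_cast; ring
      have key : ∀ x y : ZMod 8, ¬(2*x^2 - 5*(2*y+1)^2 = 1 ∨ 2*x^2 - 5*(2*y+1)^2 = 7) := by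
        decide
      apply key (p1:ZMod 8) (k:ZMod 8)
      rcases hm4 with h | h | h | h <;> rw [h] at hz <;> [left; right; right; left] <;>
        · rw [← hz]; decide
  · -- p odd: norm product odd, but 316 even
    have hr : Odd r := by
      obtain ⟨k, hk⟩ := hp
      exact ⟨k - c, by omega⟩
    have hmodd : Odd (p^2 - 10*q^2) := (hp.pow).sub_even (by exact ⟨5*q^2, by ring⟩)
    have hnodd : Odd (r^2 - 10*s^2) := (hr.pow).sub_even (by exact ⟨5*s^2, by ring⟩)
    have : Odd ((p^2 - 10*q^2) * (r^2 - 10*s^2)) := hmodd.mul hnodd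
    rw [hN] at this
    obtain ⟨k, hk⟩ := this
    omega

theorem stmt_16 : ¬ ∃ α β : ℤ√10, (⟨26, 6⟩ : ℤ√10) = α ^ 2 - β ^ 2 := by
  rintro ⟨α, β, h⟩
  have hre := congrArg Zsqrtd.re h
  have him := congrArg Zsqrtd.im h
  simp [Zsqrtd.re_sub, Zsqrtd.im_sub, pow_two, Zsqrtd.re_mul, Zsqrtd.im_mul] at hre him
  exact aux16_s16 α.re α.im β.re β.im (by linarith) (by linarith)
end

section
/- Let d ≡ 2 (mod 4) be a square-free positive integer and n = a + b√d ∈ ℤ[√d] with (a mod 4, b mod 4) ∈ {(0,1), (0,2), (0,3), (1,1), (1,3), (2,1), (2,3), (3,1), (3,3)}. Then there does not exist a Diophantine quadruple in ℤ[√d] with the property D(n). -/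
section Aux19

/-- Squares allowed residues mod 4 (for `d ≡ 2 [MOD 4]`). -/
def Sq4 : Finset (ZMod 4 × ZMod 4) := {(0,0),(1,0),(2,0),(3,2)}

def Q' (p q : ZMod 4 × ZMod 4) : Prop :=
  (p.1*q.1 + 2*(p.2*q.2), p.1*q.2 + p.2*q.1 + 2) ∈ Sq4

instance (p q : ZMod 4 × ZMod 4) : Decidable (Q' p q) := by unfold Q'; infer_instance

def zero2' (p : ZMod 4 × ZMod 4) : Prop := (p.1 = 0 ∨ p.1 = 2) ∧ (p.2 = 0 ∨ p.2 = 2)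

instance (p : ZMod 4 × ZMod 4) : Decidable (zero2' p) := by unfold zero2'; infer_instance

def bit4 (x : ZMod 4) : ZMod 2 := if x = 2 ∨ x = 3 then 1 else 0

def H' (p : ZMod 4 × ZMod 4) : ZMod 2 :=
  if p.1 = 1 ∨ p.1 = 3 then
    (if p.2 = 1 ∨ p.2 = 3 then bit4 p.2 else bit4 p.1 + bit4 p.2)
  else bit4 p.1

lemma C0 : ∀ p q, zero2' p → zero2' q → ¬ Q' p q := by decide

lemma C1 : ∀ p q, ¬ zero2' p → ¬ zero2' q → Q' p q → H' p ≠ H' q := by decide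

lemma key4 (p1 p2 p3 p4 : ZMod 4 × ZMod 4) (h12 : Q' p1 p2) (h13 : Q' p1 p3)
    (h14 : Q' p1 p4) (h23 : Q' p2 p3) (h24 : Q' p2 p4) (h34 : Q' p3 p4) : False := by
  have zm2 : ∀ u v w : ZMod 2, u ≠ v → u ≠ w → v ≠ w → False := by decide
  have tri : ∀ q1 q2 q3, ¬zero2' q1 → ¬zero2' q2 → ¬zero2' q3 →
      Q' q1 q2 → Q' q1 q3 → Q' q2 q3 → False := by
    intro q1 q2 q3 n1 n2 n3 a12 a13 a23
    exact zm2 _ _ _ (C1 _ _ n1 n2 a12) (C1 _ _ n1 n3 a13) (C1 _ _ n2 n3 a23)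
  by_cases z1 : zero2' p1
  · have n2 : ¬zero2' p2 := fun z => C0 _ _ z1 z h12
    have n3 : ¬zero2' p3 := fun z => C0 _ _ z1 z h13
    have n4 : ¬zero2' p4 := fun z => C0 _ _ z1 z h14
    exact tri p2 p3 p4 n2 n3 n4 h23 h24 h34
  · by_cases z2 : zero2' p2
    · have n3 : ¬zero2' p3 := fun z => C0 _ _ z2 z h23
      have n4 : ¬zero2' p4 := fun z => C0 _ _ z2 z h24
      exact tri p1 p3 p4 z1 n3 n4 h13 h14 h34
    · by_cases z3 : zero2' p3
      · have n4 : ¬zero2' p4 := fun z => C0 _ _ z3 z h34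
        exact tri p1 p2 p4 z1 z2 n4 h12 h14 h24
      · exact tri p1 p2 p3 z1 z2 z3 h12 h13 h23

lemma oddquad : ∀ p q r t : (ZMod 2) × (ZMod 2),
    p.1*q.2 + p.2*q.1 = 1 → p.1*r.2 + p.2*r.1 = 1 → p.1*t.2 + p.2*t.1 = 1 →
    q.1*r.2 + q.2*r.1 = 1 → q.1*t.2 + q.2*t.1 = 1 → r.1*t.2 + r.2*t.1 = 1 → False := by
  decide

lemma sq_im_even {d : ℤ} {z : ℤ√d} (h : IsSquare z) : (z.im : ZMod 2) = 0 := by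
  obtain ⟨w, rfl⟩ := h
  rw [Zsqrtd.im_mul]
  push_cast
  generalize (w.re : ZMod 2) = u
  generalize (w.im : ZMod 2) = v
  revert u v; decide

lemma sq_mod4 {d : ℤ} (hd : (d : ZMod 4) = 2) {z : ℤ√d} (h : IsSquare z) :
    ((z.re : ZMod 4), (z.im : ZMod 4)) ∈ Sq4 := by
  obtain ⟨w, rfl⟩ := h
  rw [Zsqrtd.re_mul, Zsqrtd.im_mul]
  push_cast
  rw [hd]
  generalize (w.re : ZMod 4) = u
  generalize (w.im : ZMod 4) = v
  revert u v; decide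

end Aux19

theorem stmt_19 (d : ℤ) (hd : d % 4 = 2) (hsf : Squarefree d) (hpos : 0 < d)
    (a b : ℤ)
    (hab : (a % 4, b % 4) ∈
      ({(0, 1), (0, 2), (0, 3), (1, 1), (1, 3), (2, 1), (2, 3), (3, 1), (3, 3)} :
        Set (ℤ × ℤ)))
    (n : ℤ√d) (hn : n = ⟨a, b⟩) :
    ¬ ∃ s : Finset (ℤ√d), s.card = 4 ∧ (0 : ℤ√d) ∉ s ∧
      ∀ x ∈ s, ∀ y ∈ s, x ≠ y → IsSquare (x * y + n) := by
  subst hn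
  rintro ⟨s, hcard, -, hsq⟩
  -- extract the four elements
  rw [show (4:ℕ) = 3+1 from rfl, Finset.card_eq_succ] at hcard
  obtain ⟨x1, t, hx1t, rfl, ht⟩ := hcard
  rw [Finset.card_eq_three] at ht
  obtain ⟨x2, x3, x4, h23, h24, h34, rfl⟩ := ht
  simp only [Finset.mem_insert, Finset.mem_singleton, not_or] at hx1t
  obtain ⟨h12, h13, h14⟩ := hx1t
  have m1 : x1 ∈ insert x1 ({x2, x3, x4} : Finset (ℤ√d)) := by simp
  have m2 : x2 ∈ insert x1 ({x2, x3, x4} : Finset (ℤ√d)) := by simp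
  have m3 : x3 ∈ insert x1 ({x2, x3, x4} : Finset (ℤ√d)) := by simp
  have m4 : x4 ∈ insert x1 ({x2, x3, x4} : Finset (ℤ√d)) := by simp
  have s12 := hsq x1 m1 x2 m2 h12
  have s13 := hsq x1 m1 x3 m3 h13
  have s14 := hsq x1 m1 x4 m4 h14
  have s23 := hsq x2 m2 x3 m3 h23
  have s24 := hsq x2 m2 x4 m4 h24
  have s34 := hsq x3 m3 x4 m4 h34
  have hcase : b % 2 = 1 ∨ (a % 4 = 0 ∧ b % 4 = 2) := by
    simp only [Set.mem_insert_iff, Set.mem_singleton_iff, Prod.mk.injEq] at hab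
    omega
  rcases hcase with hodd | ⟨ha, hb⟩
  · -- b odd: imaginary part of n is odd, products must have odd imaginary part
    have hb2 : (b : ZMod 2) = 1 := by
      have : ((b : ℤ) : ZMod 2) = ((1 : ℤ) : ZMod 2) := by
        rw [ZMod.intCast_eq_intCast_iff]
        show b % 2 = 1 % 2
        omega
      simpa using this
    have pair : ∀ x y : ℤ√d, IsSquare (x * y + (⟨a, b⟩ : ℤ√d)) →
        (x.re : ZMod 2) * (y.im : ZMod 2) + (x.im : ZMod 2) * (y.re : ZMod 2) = 1 := by
      intro x y h
      have h0 := sq_im_even h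
      rw [Zsqrtd.im_add, Zsqrtd.im_mul] at h0
      push_cast at h0
      rw [hb2] at h0
      have h2 : (2 : ZMod 2) = 0 := rfl
      linear_combination h0 - h2
    exact oddquad ((x1.re : ZMod 2), (x1.im : ZMod 2)) ((x2.re : ZMod 2), (x2.im : ZMod 2))
      ((x3.re : ZMod 2), (x3.im : ZMod 2)) ((x4.re : ZMod 2), (x4.im : ZMod 2))
      (pair _ _ s12) (pair _ _ s13) (pair _ _ s14)
      (pair _ _ s23) (pair _ _ s24) (pair _ _ s34)
  · -- n ≡ (0, 2) mod 4
    have hd4 : (d : ZMod 4) = 2 := by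
      have : ((d : ℤ) : ZMod 4) = ((2 : ℤ) : ZMod 4) := by
        rw [ZMod.intCast_eq_intCast_iff]
        show d % 4 = 2 % 4
        omega
      simpa using this
    have ha4 : (a : ZMod 4) = 0 := by
      have : ((a : ℤ) : ZMod 4) = ((0 : ℤ) : ZMod 4) := by
        rw [ZMod.intCast_eq_intCast_iff]
        show a % 4 = 0 % 4
        omega
      simpa using this
    have hb4 : (b : ZMod 4) = 2 := by
      have : ((b : ℤ) : ZMod 4) = ((2 : ℤ) : ZMod 4) := by
        rw [ZMod.intCast_eq_intCast_iff]
        show b % 4 = 2 % 4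
        omega
      simpa using this
    have pair : ∀ x y : ℤ√d, IsSquare (x * y + (⟨a, b⟩ : ℤ√d)) →
        Q' ((x.re : ZMod 4), (x.im : ZMod 4)) ((y.re : ZMod 4), (y.im : ZMod 4)) := by
      intro x y h
      have h0 := sq_mod4 hd4 h
      have hre : (((x * y + (⟨a, b⟩ : ℤ√d)).re : ℤ) : ZMod 4) =
          (x.re : ZMod 4) * (y.re : ZMod 4) + 2 * ((x.im : ZMod 4) * (y.im : ZMod 4)) := by
        rw [Zsqrtd.re_add, Zsqrtd.re_mul]
        push_cast
        rw [hd4, ha4]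
        ring
      have him : (((x * y + (⟨a, b⟩ : ℤ√d)).im : ℤ) : ZMod 4) =
          (x.re : ZMod 4) * (y.im : ZMod 4) + (x.im : ZMod 4) * (y.re : ZMod 4) + 2 := by
        rw [Zsqrtd.im_add, Zsqrtd.im_mul]
        push_cast
        rw [hb4]
      rw [hre, him] at h0
      exact h0
    exact key4 ((x1.re : ZMod 4), (x1.im : ZMod 4)) ((x2.re : ZMod 4), (x2.im : ZMod 4))
      ((x3.re : ZMod 4), (x3.im : ZMod 4)) ((x4.re : ZMod 4), (x4.im : ZMod 4))
      (pair _ _ s12) (pair _ _ s13) (pair _ _ s14)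
      (pair _ _ s23) (pair _ _ s24) (pair _ _ s34)
end
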